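/- arXiv:2209.10572 — 2 statements merged into one kernel-verified Lean document; each statement's English description precedes it below -/
import Mathlib

section
/- Let d ≥ 2, let B ⊂ ℝ^d be an open ball with L^d(B) > 1, let 0 < θ < Θ, and let A ∈ M_{θ,Θ}(B). There exists a constant C₀ > 0, independent of δ and ε, such that for all δ, ε > 0, every minimizer u of F_{δ,ε} over H¹₀(B) satisfies ∫_B ∇u·(A∇u) dx + (1/δ)|∫_B u² dx − 1| + (1/ε)(L^d({u ≠ 0}) − 1)₊ ≤ C₀. In particular, ∫_B θ|∇u|² dx ≤ C₀ and ∫_B u² dx ≥ 1 − C₀δ. -/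
open MeasureTheory Metric ENNReal

noncomputable section

/-- The unit-type Euclidean space `ℝ^d`. -/
abbrev Euc (d : ℕ) := EuclideanSpace ℝ (Fin d)

/-- `A ∈ M_{θ,Θ}(B)`: measurable, symmetric, uniformly elliptic coefficients on `B`. -/
def MatClass {d : ℕ} (θ Θ : ℝ) (B : Set (Euc d)) (A : Euc d → Matrix (Fin d) (Fin d) ℝ) : Prop :=
  (∀ i j, Measurable fun x => A x i j) ∧
  ∀ᵐ x ∂(volume.restrict B),
    (A x).IsSymm ∧
    ∀ v : Fin d → ℝ,
      θ * (∑ i, v i ^ 2) ≤ dotProduct v ((A x).mulVec v) ∧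
      dotProduct v ((A x).mulVec v) ≤ Θ * (∑ i, v i ^ 2)

/-- Membership in `H¹₀(Ω)`, formulated via zero extension: `u, gu ∈ L²(ℝ^d)`, both vanish
a.e. outside `Ω`, and `gu` is the weak gradient of `u` on all of `ℝ^d`. -/
def MemH10 {d : ℕ} (Ω : Set (Euc d)) (u : Euc d → ℝ) (gu : Euc d → Euc d) : Prop :=
  MemLp u 2 volume ∧ MemLp gu 2 volume ∧
  (∀ᵐ x ∂volume, x ∉ Ω → u x = 0) ∧ (∀ᵐ x ∂volume, x ∉ Ω → gu x = 0) ∧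
  ∀ φ : Euc d → ℝ, ContDiff ℝ (⊤ : ℕ∞) φ → HasCompactSupport φ →
    ∫ x, u x • gradient φ x = - ∫ x, φ x • gu x

/-- The Dirichlet energy `∫_Ω ∇u ⋅ (A ∇u) dx` (written in terms of the weak gradient `gu`). -/
def energy {d : ℕ} (A : Euc d → Matrix (Fin d) (Fin d) ℝ) (Ω : Set (Euc d))
    (gu : Euc d → Euc d) : ℝ :=
  ∫ x in Ω, dotProduct (fun i => gu x i) ((A x).mulVec (fun i => gu x i))

/-- The first Dirichlet eigenvalue `λ₁^A(Ω)`. -/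
def lambda1 {d : ℕ} (A : Euc d → Matrix (Fin d) (Fin d) ℝ) (Ω : Set (Euc d)) : ℝ :=
  sInf { t : ℝ | ∃ u gu, MemH10 Ω u gu ∧ ¬ (u =ᵐ[volume] fun _ => (0 : ℝ)) ∧
    t = energy A Ω gu / ∫ x in Ω, (u x) ^ 2 }

/-- The penalized functional `F_{δ,ε}`. -/
def Fpen {d : ℕ} (A : Euc d → Matrix (Fin d) (Fin d) ℝ) (B : Set (Euc d)) (δ ε : ℝ)
    (u : Euc d → ℝ) (gu : Euc d → Euc d) : ℝ :=
  energy A B gu + (1 / δ) * |(∫ x in B, (u x) ^ 2) - 1|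
    + (1 / ε) * max ((volume {x | u x ≠ 0}).toReal - 1) 0

/-- `u` (with weak gradient `gu`) minimizes `F_{δ,ε}` over `H¹₀(B)`. -/
def Minimizes {d : ℕ} (A : Euc d → Matrix (Fin d) (Fin d) ℝ) (B : Set (Euc d)) (δ ε : ℝ)
    (u : Euc d → ℝ) (gu : Euc d → Euc d) : Prop :=
  MemH10 B u gu ∧ ∀ w gw, MemH10 B w gw → Fpen A B δ ε u gu ≤ Fpen A B δ ε w gw

/-- Membership in `H¹(Ω)`. -/
def MemH1 {d : ℕ} (Ω : Set (Euc d)) (w : Euc d → ℝ) (gw : Euc d → Euc d) : Prop :=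
  MemLp w 2 (volume.restrict Ω) ∧ MemLp gw 2 (volume.restrict Ω) ∧
  ∀ φ : Euc d → ℝ, ContDiff ℝ (⊤ : ℕ∞) φ → HasCompactSupport φ → tsupport φ ⊆ Ω →
    ∫ x in Ω, w x • gradient φ x = - ∫ x in Ω, φ x • gw x


section AuxLemmas

open Function

variable {d : ℕ}

lemma continuous_gradient' {φ : Euc d → ℝ} (hφ : ContDiff ℝ 1 φ) :
    Continuous (gradient φ) :=
  ((InnerProductSpace.toDual ℝ (Euc d)).symm.continuous).comp (hφ.continuous_fderiv one_ne_zero)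

lemma gradient_eq_zero_of_nmem_tsupport {φ : Euc d → ℝ} {x : Euc d} (hx : x ∉ tsupport φ) :
    gradient φ x = 0 := by
  have h : fderiv ℝ φ x = 0 := by
    by_contra h
    exact hx (support_fderiv_subset ℝ (Function.mem_support.2 h))
  simp [gradient, h]

lemma hcs_gradient {φ : Euc d → ℝ} (hφ : HasCompactSupport φ) :
    HasCompactSupport (gradient φ) :=
  (hφ.fderiv ℝ).comp_left (g := (InnerProductSpace.toDual ℝ (Euc d)).symm) (map_zero _)

lemma inner_gradient {φ : Euc d → ℝ} (hφ : Differentiable ℝ φ) (x v : Euc d) :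
    (inner ℝ v (gradient φ x) : ℝ) = lineDeriv ℝ φ x v := by
  rw [real_inner_comm, gradient, InnerProductSpace.toDual_symm_apply,
    (hφ x).lineDeriv_eq_fderiv]

lemma ibp {u φ : Euc d → ℝ} (hu : ContDiff ℝ 1 u) (hcu : HasCompactSupport u)
    (hφ : ContDiff ℝ 1 φ) (hcφ : HasCompactSupport φ) :
    ∫ x, u x • gradient φ x = - ∫ x, φ x • gradient u x := by
  obtain ⟨C, hC⟩ := ContDiff.lipschitzWith_of_hasCompactSupport hcu hu one_ne_zero
  obtain ⟨D, hD⟩ := ContDiff.lipschitzWith_of_hasCompactSupport hcφ hφ one_ne_zero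
  have I1 : Integrable (fun x => u x • gradient φ x) volume :=
    (hu.continuous.smul (continuous_gradient' hφ)).integrable_of_hasCompactSupport
      hcu.smul_right
  have I2 : Integrable (fun x => φ x • gradient u x) volume :=
    (hφ.continuous.smul (continuous_gradient' hu)).integrable_of_hasCompactSupport
      hcφ.smul_right
  refine ext_inner_left ℝ fun v => ?_
  rw [inner_neg_right, ← integral_inner I1 v, ← integral_inner I2 v]
  have hdu := hu.differentiable one_ne_zero
  have hdφ := hφ.differentiable one_ne_zero
  simp only [real_inner_smul_right, inner_gradient hdφ, inner_gradient hdu]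
  have key := LipschitzWith.integral_lineDeriv_mul_eq (μ := (volume : Measure (Euc d)))
    hD hC hcu v
  have hneg : ∀ x, lineDeriv ℝ u x (-v) = -lineDeriv ℝ u x v := by
    intro x
    rw [(hdu x).lineDeriv_eq_fderiv, (hdu x).lineDeriv_eq_fderiv, map_neg]
  simp only [hneg, neg_mul] at key
  calc ∫ x, u x * lineDeriv ℝ φ x v = ∫ x, lineDeriv ℝ φ x v * u x := by
        simp only [mul_comm]
    _ = ∫ x, -(lineDeriv ℝ u x v * φ x) := key
    _ = - ∫ x, lineDeriv ℝ u x v * φ x := integral_neg _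
    _ = - ∫ x, φ x * lineDeriv ℝ u x v := by simp only [mul_comm]

lemma exists_competitor (d : ℕ) (hd : 2 ≤ d) (c : Euc d) (R : ℝ) (hR : 0 < R) :
    ∃ v : Euc d → ℝ, ∃ gv : Euc d → Euc d,
      MemH10 (ball c R) v gv ∧ (∫ x in ball c R, v x ^ 2) = 1 ∧
      volume {x | v x ≠ 0} ≤ 1 := by
  haveI : Nontrivial (Euc d) :=
    nontrivial_of_ne (EuclideanSpace.single (⟨0, by omega⟩ : Fin d) (1 : ℝ)) 0 (by
      intro h
      have := congrArg norm h
      simp [EuclideanSpace.norm_single] at this)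
  set V : ℝ≥0∞ := volume (ball (0 : Euc d) 1) with hV
  have hV0 : V ≠ 0 := (measure_ball_pos _ _ one_pos).ne'
  have hVtop : V ≠ ⊤ := measure_ball_lt_top.ne
  have hVinvtop : V⁻¹ ≠ ⊤ := by simp [hV0]
  have hVinv0 : V⁻¹ ≠ 0 := by simp [hVtop]
  set r : ℝ := min (min (V⁻¹).toReal 1) (R / 2) with hr_def
  have hr0 : 0 < r := by
    refine lt_min (lt_min ?_ one_pos) (by positivity)
    exact ENNReal.toReal_pos hVinv0 hVinvtop
  have hr1 : r ≤ 1 := le_trans (min_le_left _ _) (min_le_right _ _)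
  have hrV : r ≤ (V⁻¹).toReal := le_trans (min_le_left _ _) (min_le_left _ _)
  have hrR : r < R := lt_of_le_of_lt (min_le_right _ _) (by linarith)
  have hvolr : volume (ball c r) ≤ 1 := by
    rw [Measure.addHaar_ball _ _ hr0.le, ← hV]
    calc ENNReal.ofReal (r ^ Module.finrank ℝ (Euc d)) * V
        ≤ ENNReal.ofReal r * V := by
          gcongr
          refine pow_le_of_le_one hr0.le hr1 ?_
          rw [finrank_euclideanSpace_fin]
          omega
      _ ≤ V⁻¹ * V := by
          gcongr
          rw [← ENNReal.ofReal_toReal hVinvtop]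
          exact ENNReal.ofReal_le_ofReal hrV
      _ = 1 := ENNReal.inv_mul_cancel hV0 hVtop
  set f : ContDiffBump c := ⟨r / 2, r, by positivity, by linarith⟩ with hf_def
  have hfc : ContDiff ℝ 1 ⇑f := f.contDiff
  have hfs : HasCompactSupport ⇑f := f.hasCompactSupport
  have hfsupp : Function.support ⇑f = ball c r := f.support_eq
  have hftsupp : tsupport ⇑f = closedBall c r := f.tsupport_eq
  set I : ℝ := ∫ x, f x * f x with hI_def
  have hIint : Integrable (fun x => f x * f x) volume :=
    (hfc.continuous.mul hfc.continuous).integrable_of_hasCompactSupport hfs.mul_left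
  have hsupp_sq : Function.support (fun x => f x * f x) = ball c r := by
    rw [← hfsupp]; ext x; simp [Function.mem_support, mul_self_eq_zero]
  have hI : 0 < I := by
    rw [hI_def]
    rw [integral_pos_iff_support_of_nonneg_ae
      (Filter.Eventually.of_forall fun x => mul_self_nonneg _) hIint, hsupp_sq]
    exact measure_ball_pos _ _ hr0
  set a : ℝ := (Real.sqrt I)⁻¹ with ha_def
  have ha0 : a ≠ 0 := inv_ne_zero (Real.sqrt_ne_zero'.mpr hI)
  have ha2 : a ^ 2 * I = 1 := by
    rw [ha_def, inv_pow, Real.sq_sqrt hI.le]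
    exact inv_mul_cancel₀ hI.ne'
  set v : Euc d → ℝ := fun x => a * f x with hv_def
  set gv : Euc d → Euc d := fun x => a • gradient (⇑f) x with hgv_def
  have hvc : ContDiff ℝ 1 v := contDiff_const.mul hfc
  have hvs : HasCompactSupport v := hfs.mul_left
  have hvsupp : Function.support v = ball c r := by
    rw [← hfsupp]
    ext x
    simp only [Function.mem_support, hv_def, ne_eq, mul_eq_zero, not_or]
    exact ⟨fun h => h.2, fun h => ⟨ha0, h⟩⟩
  have hgradf_cont : Continuous (gradient ⇑f) := continuous_gradient' hfc
  have hgradf_cs : HasCompactSupport (gradient ⇑f) := hcs_gradient hfs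
  have hgv_eq : gv = gradient v := by
    funext x
    have hfd : fderiv ℝ (fun y => a • f y) x = a • fderiv ℝ ⇑f x :=
      fderiv_fun_const_smul ((hfc.differentiable one_ne_zero) x) a
    have : gradient v x = (InnerProductSpace.toDual ℝ (Euc d)).symm
        (fderiv ℝ (fun y => a • f y) x) := by
      simp only [gradient, hv_def, smul_eq_mul]
    rw [hgv_def, this, hfd, LinearIsometryEquiv.map_smul]
    rfl
  have hgvc : Continuous gv := by exact hgradf_cont.const_smul a
  have hgvs : HasCompactSupport gv := hgradf_cs.comp_left
    (g := fun y : Euc d => a • y) (by simp)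
  refine ⟨v, gv, ⟨?_, ?_, ?_, ?_, ?_⟩, ?_, ?_⟩
  · exact hvc.continuous.memLp_of_hasCompactSupport hvs
  · exact hgvc.memLp_of_hasCompactSupport hgvs
  · refine Filter.Eventually.of_forall fun x hx => ?_
    have : x ∉ Function.support v := fun h => hx (ball_subset_ball hrR.le (hvsupp ▸ h))
    simpa [Function.mem_support, not_not] using this
  · refine Filter.Eventually.of_forall fun x hx => ?_
    have hxt : x ∉ tsupport ⇑f := by
      rw [hftsupp]
      exact fun h => hx (closedBall_subset_ball hrR h)
    rw [hgv_def]
    simp [gradient_eq_zero_of_nmem_tsupport hxt]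
  · intro φ hφ hcφ
    rw [hgv_eq]
    exact ibp hvc hvs (hφ.of_le (by simp)) hcφ
  · have hzero : ∀ x, x ∉ ball c R → v x ^ 2 = 0 := by
      intro x hx
      have : x ∉ Function.support v := fun h => hx (ball_subset_ball hrR.le (hvsupp ▸ h))
      simp [Function.notMem_support.mp this]
    rw [setIntegral_eq_integral_of_forall_compl_eq_zero hzero]
    have : ∀ x, v x ^ 2 = a ^ 2 * (f x * f x) := by intro x; rw [hv_def]; ring
    simp_rw [this]
    rw [integral_const_mul, ← hI_def, ha2]
  · have : {x | v x ≠ 0} = ball c r := hvsupp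
    rw [this]
    exact hvolr

lemma norm_sq_eq_sum (y : Euc d) : ‖y‖ ^ 2 = ∑ i, (y i) ^ 2 := by
  rw [EuclideanSpace.norm_eq, Real.sq_sqrt (by positivity)]
  simp [sq_abs]

lemma energy_nonneg {θ Θ : ℝ} (hθ : 0 ≤ θ) {B : Set (Euc d)}
    {A : Euc d → Matrix (Fin d) (Fin d) ℝ} (hA : MatClass θ Θ B A)
    (g : Euc d → Euc d) : 0 ≤ energy A B g := by
  refine integral_nonneg_of_ae ?_
  filter_upwards [hA.2] with x hx
  have h1 := (hx.2 (fun i => g x i)).1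
  have h0 : (0:ℝ) ≤ θ * ∑ i, (g x i) ^ 2 := by positivity
  simpa using h0.trans h1

end AuxLemmas

/-- a uniform bound `F_{δ,ε}(u) ≤ C₀`, with `C₀` independent of `δ` and `ε`,
for every minimizer `u` of `F_{δ,ε}`; in particular `∫_B θ|∇u|² ≤ C₀` and
`∫_B u² ≥ 1 - C₀ δ`. -/
theorem uniform_bound_for_minimizers
    (d : ℕ) (hd : 2 ≤ d) (B : Set (Euc d)) (hB : ∃ c R, 0 < R ∧ B = ball c R)
    (hvol : 1 < volume B) (θ Θ : ℝ) (hθ : 0 < θ) (hθΘ : θ < Θ)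
    (A : Euc d → Matrix (Fin d) (Fin d) ℝ) (hA : MatClass θ Θ B A) :
    ∃ C₀ : ℝ, 0 < C₀ ∧
      ∀ δ ε : ℝ, 0 < δ → 0 < ε → ∀ u gu, Minimizes A B δ ε u gu →
        Fpen A B δ ε u gu ≤ C₀ ∧
        (∫ x in B, θ * ‖gu x‖ ^ 2) ≤ C₀ ∧
        1 - C₀ * δ ≤ ∫ x in B, u x ^ 2 := by
  obtain ⟨c, R, hR, rfl⟩ := hB
  obtain ⟨v, gv, hvmem, hvint, hvvol⟩ := exists_competitor d hd c R hR
  set B : Set (Euc d) := ball c R with hB_def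
  set E0 : ℝ := energy A B gv with hE0_def
  have hE0 : 0 ≤ E0 := energy_nonneg hθ.le hA gv
  refine ⟨E0 + 1, by linarith, ?_⟩
  intro δ ε hδ hε u gu hmin
  obtain ⟨humem, hopt⟩ := hmin
  -- the value of Fpen at the competitor
  have hFv : Fpen A B δ ε v gv = E0 := by
    have h1 : |(∫ x in B, (v x) ^ 2) - 1| = 0 := by rw [hvint]; simp
    have h2 : max ((volume {x | v x ≠ 0}).toReal - 1) 0 = 0 := by
      refine max_eq_right ?_
      have := ENNReal.toReal_mono ENNReal.one_ne_top hvvol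
      simp only [ENNReal.toReal_one] at this
      linarith
    rw [Fpen, h1, h2]
    ring
  have hFu : Fpen A B δ ε u gu ≤ E0 := hFv ▸ hopt v gv hvmem
  -- nonnegativity of the three terms of Fpen at u
  have heu : 0 ≤ energy A B gu := energy_nonneg hθ.le hA gu
  have hP1 : 0 ≤ (1 / δ) * |(∫ x in B, (u x) ^ 2) - 1| := by positivity
  have hP2 : 0 ≤ (1 / ε) * max ((volume {x | u x ≠ 0}).toReal - 1) 0 := by positivity
  have hFu_expand : Fpen A B δ ε u gu = energy A B gu
      + (1 / δ) * |(∫ x in B, (u x) ^ 2) - 1|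
      + (1 / ε) * max ((volume {x | u x ≠ 0}).toReal - 1) 0 := rfl
  refine ⟨by linarith, ?_, ?_⟩
  · -- ∫ θ ‖gu‖² ≤ C₀
    have hgu2 : MemLp gu 2 (volume.restrict B) := humem.2.1.restrict B
    have hns : Integrable (fun x => ‖gu x‖ ^ 2) (volume.restrict B) :=
      hgu2.norm.integrable_sq
    have hguaem : AEMeasurable gu (volume.restrict B) := hgu2.aestronglyMeasurable.aemeasurable
    have hcoord : ∀ i, AEMeasurable (fun x => gu x i) (volume.restrict B) := fun i =>
      ((EuclideanSpace.proj i : Euc d →L[ℝ] ℝ).continuous.measurable).comp_aemeasurable hguaem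
    set g : Euc d → ℝ :=
      fun x => dotProduct (fun i => gu x i) ((A x).mulVec (fun i => gu x i)) with hg_def
    have hg_meas : AEStronglyMeasurable g (volume.restrict B) := by
      refine AEMeasurable.aestronglyMeasurable ?_
      simp only [hg_def, dotProduct, Matrix.mulVec]
      refine Finset.aemeasurable_fun_sum _ fun i _ => ?_
      refine (hcoord i).mul ?_
      refine Finset.aemeasurable_fun_sum _ fun j _ => ?_
      exact ((hA.1 i j).aemeasurable.restrict).mul (hcoord j)
    have hbd : ∀ᵐ x ∂(volume.restrict B),
        θ * ‖gu x‖ ^ 2 ≤ g x ∧ g x ≤ Θ * ‖gu x‖ ^ 2 := by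
      filter_upwards [hA.2] with x hx
      have h := hx.2 (fun i => gu x i)
      have hnorm : ‖gu x‖ ^ 2 = ∑ i, (gu x i) ^ 2 := norm_sq_eq_sum (gu x)
      rw [hg_def, hnorm]
      exact h
    have hg_int : Integrable g (volume.restrict B) := by
      refine Integrable.mono' (hns.const_mul Θ) hg_meas ?_
      filter_upwards [hbd] with x hx
      rw [Real.norm_eq_abs, abs_le]
      constructor
      · have : (0:ℝ) ≤ θ * ‖gu x‖ ^ 2 := by positivity
        nlinarith [hx.1, hx.2]
      · exact hx.2
    have : (∫ x in B, θ * ‖gu x‖ ^ 2) ≤ energy A B gu := by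
      rw [energy]
      refine integral_mono_of_nonneg ?_ hg_int ?_
      · filter_upwards with x
        positivity
      · filter_upwards [hbd] with x hx
        exact hx.1
    linarith
  · -- 1 - C₀ δ ≤ ∫ u²
    have h1 : (1 / δ) * |(∫ x in B, (u x) ^ 2) - 1| ≤ E0 + 1 := by linarith
    have h2 : |(∫ x in B, (u x) ^ 2) - 1| ≤ (E0 + 1) * δ := by
      rw [one_div, inv_mul_le_iff₀ hδ] at h1
      linarith [h1]
    have h3 := neg_abs_le ((∫ x in B, (u x) ^ 2) - 1)
    linarith
end
end

section
/- Let d ≥ 2, let B ⊂ ℝ^d be an open ball with L^d(B) > 1, let 0 < θ < Θ, let A ∈ M_{θ,Θ}(B), and let C₀ be a constant such that every minimizer u of F_{δ,ε} over H¹₀(B) satisfies F_{δ,ε}(u) ≤ C₀ for all δ, ε > 0. If δ < 1/(2C₀), then any minimizer u of F_{δ,ε} over H¹₀(B) satisfies ∫_B u² dx = 1. -/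
open MeasureTheory Metric ENNReal

noncomputable section

private lemma minimizer_arith (m E δ C₀ : ℝ) (hE0 : 0 ≤ E) (hEC : E ≤ C₀)
    (hδ : 0 < δ) (hδC : δ * C₀ < 1 / 2) (hm0 : 1 / 2 < m) (hne : m ≠ 1)
    (hkey2 : m * E + m * (1 / δ * |m - 1|) ≤ E) : False := by
  have hδ1 : δ * (1 / δ) = 1 := mul_one_div_cancel hδ.ne'
  rcases lt_or_gt_of_ne hne with hlt | hgt
  · have habs' : |m - 1| = 1 - m := by rw [abs_of_nonpos (by linarith)]; ring
    rw [habs'] at hkey2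
    have h4 : m * (1 / δ) * (1 - m) ≤ E * (1 - m) := by nlinarith
    have h5 : (0:ℝ) < 1 - m := by linarith
    have h3 : m * (1 / δ) ≤ E := le_of_mul_le_mul_right h4 h5
    have h6 : m ≤ δ * E := by
      have := mul_le_mul_of_nonneg_left h3 hδ.le
      nlinarith
    nlinarith
  · have habs' : |m - 1| = m - 1 := abs_of_nonneg (by linarith)
    rw [habs'] at hkey2
    have hδpos : (0:ℝ) < 1 / δ := by positivity
    nlinarith [mul_nonneg (by linarith : (0:ℝ) ≤ m - 1) hE0,
      mul_pos (mul_pos (by linarith : (0:ℝ) < m) hδpos) (by linarith : (0:ℝ) < m - 1)]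

/-- Lemma 2.1(a): if `δ < 1/(2C₀)`, any minimizer `u` of `F_{δ,ε}` over
`H¹₀(B)` satisfies `∫_B u² dx = 1`. -/
theorem minimizer_l2_constraint
    (d : ℕ) (hd : 2 ≤ d) (B : Set (Euc d)) (hB : ∃ c R, 0 < R ∧ B = ball c R)
    (hvol : 1 < volume B) (θ Θ : ℝ) (hθ : 0 < θ) (hθΘ : θ < Θ)
    (A : Euc d → Matrix (Fin d) (Fin d) ℝ) (hA : MatClass θ Θ B A)
    (C₀ : ℝ) (hC₀ : 0 < C₀)
    (hbound : ∀ δ ε : ℝ, 0 < δ → 0 < ε → ∀ u gu, Minimizes A B δ ε u gu →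
      Fpen A B δ ε u gu ≤ C₀)
    (δ ε : ℝ) (hδ : 0 < δ) (hε : 0 < ε) (hδsmall : δ < 1 / (2 * C₀)) :
    ∀ u gu, Minimizes A B δ ε u gu → (∫ x in B, u x ^ 2) = 1 := by
  intro u gu hmin
  set m := ∫ x in B, u x ^ 2 with hm
  by_contra hne
  -- energy is nonnegative
  have hE0 : 0 ≤ energy A B gu := by
    refine integral_nonneg_of_ae ?_
    filter_upwards [hA.2] with x hx
    have h := (hx.2 (fun i => gu x i)).1
    refine le_trans ?_ h
    positivity
  set P := (1 / ε) * max ((volume {x | u x ≠ 0}).toReal - 1) 0 with hP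
  have hP0 : 0 ≤ P := by positivity
  have hF := hbound δ ε hδ hε u gu hmin
  unfold Fpen at hF
  rw [← hm, ← hP] at hF
  have habs0 : 0 ≤ |m - 1| := abs_nonneg _
  have hEC : energy A B gu ≤ C₀ := by
    have h0 : 0 ≤ 1 / δ * |m - 1| := by positivity
    linarith
  have hδC : δ * C₀ < 1 / 2 := by
    have := (lt_div_iff₀ (by positivity : (0:ℝ) < 2 * C₀)).mp hδsmall
    nlinarith
  have habs : |m - 1| ≤ δ * C₀ := by
    have h1 : (1 / δ) * |m - 1| ≤ C₀ := by nlinarith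
    have := mul_le_mul_of_nonneg_left h1 hδ.le
    rw [← mul_assoc, mul_one_div_cancel hδ.ne', one_mul] at this
    linarith
  have hm0 : (1:ℝ)/2 < m := by
    have := abs_lt.mp (lt_of_le_of_lt habs hδC)
    linarith [this.1]
  have hmpos : (0:ℝ) < m := by linarith
  set t := (Real.sqrt m)⁻¹ with htdef
  have hsq : Real.sqrt m ≠ 0 := by positivity
  have ht : t ≠ 0 := inv_ne_zero hsq
  have ht2 : t ^ 2 = m⁻¹ := by rw [htdef, inv_pow, Real.sq_sqrt hmpos.le]
  set w : Euc d → ℝ := fun x => t * u x with hwdef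
  set gw : Euc d → Euc d := fun x => t • gu x with hgwdef
  have hw : MemH10 B w gw := by
    obtain ⟨hu2, hgu2, huz, hguz, hweak⟩ := hmin.1
    refine ⟨hu2.const_mul t, hgu2.const_smul t, ?_, ?_, ?_⟩
    · filter_upwards [huz] with x hx hxB
      simp [hwdef, hx hxB]
    · filter_upwards [hguz] with x hx hxB
      simp [hgwdef, hx hxB]
    · intro φ hφ hφc
      have h1 := hweak φ hφ hφc
      calc ∫ x, w x • gradient φ x
          = ∫ x, t • (u x • gradient φ x) := by
            simp only [hwdef, smul_smul]
        _ = t • ∫ x, u x • gradient φ x := integral_smul t _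
        _ = t • (- ∫ x, φ x • gu x) := by rw [h1]
        _ = - ∫ x, φ x • gw x := by
            rw [smul_neg]
            congr 1
            rw [← integral_smul]
            refine integral_congr_ae (Filter.Eventually.of_forall fun x => ?_)
            simp only [hgwdef]
            rw [smul_comm]
  -- energy scaling
  have hEn : energy A B gw = t ^ 2 * energy A B gu := by
    unfold energy
    rw [← integral_const_mul]
    refine integral_congr_ae (Filter.Eventually.of_forall fun x => ?_)
    dsimp only
    have hv : (fun i => gw x i) = t • (fun i => gu x i) := by
      funext i; simp [hgwdef]
    rw [hv, Matrix.mulVec_smul, smul_dotProduct, dotProduct_smul,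
      smul_eq_mul, smul_eq_mul]
    ring
  have hInt : (∫ x in B, w x ^ 2) = t ^ 2 * m := by
    rw [hm, ← integral_const_mul]
    refine integral_congr_ae (Filter.Eventually.of_forall fun x => ?_)
    simp only [hwdef]; ring
  have ht2m : t ^ 2 * m = 1 := by
    rw [ht2, inv_mul_cancel₀ hmpos.ne']
  have hsupp : {x | w x ≠ 0} = {x | u x ≠ 0} := by
    ext x
    simp [hwdef, mul_eq_zero, ht]
  have hkey := hmin.2 w gw hw
  unfold Fpen at hkey
  rw [← hm, ← hP, hEn, hInt, ht2m, hsupp, ← hP, ht2] at hkey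
  simp only [sub_self, abs_zero, mul_zero, add_zero] at hkey
  -- hkey : energy + (1/δ)*|m-1| + P ≤ m⁻¹ * energy + P
  have hkey2 : m * energy A B gu + m * (1 / δ * |m - 1|) ≤ energy A B gu := by
    have h2 : energy A B gu + 1 / δ * |m - 1| ≤ m⁻¹ * energy A B gu := by linarith
    have h3 : m * (m⁻¹ * energy A B gu) = energy A B gu := by
      field_simp
    nlinarith [mul_le_mul_of_nonneg_left h2 hmpos.le]
  exact minimizer_arith m (energy A B gu) δ C₀ hE0 hEC hδ hδC hm0 hne hkey2
end
end
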